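/- The doubling number of the decreasing permutation k(k-1)(k-2)···1 is k-1, and every other permutation of length k has doubling number strictly less than k-1. -/

import Mathlib

/-- The `j`-th entry (1-indexed) of the permutation `w`, as a value in `1..k`,
with the convention that the 0-th entry is `k+1` (playing the role of `+∞`). -/
def entryVal {k : ℕ} (w : Equiv.Perm (Fin k)) (j : ℕ) : ℕ :=
  if j = 0 then k + 1 else if h : j - 1 < k then (w ⟨j - 1, h⟩).val + 1 else 0

/-- The doubling set `d(p) = { i ∈ [k-1] : p(i-1) > p(i) > p(i+1) or p(i-1) < p(i) < p(i+1) }`,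
with `p(0) = +∞`. -/
def doublingSet {k : ℕ} (w : Equiv.Perm (Fin k)) : Finset ℕ :=
  (Finset.Ico 1 k).filter fun i =>
    (entryVal w (i - 1) > entryVal w i ∧ entryVal w i > entryVal w (i + 1)) ∨
    (entryVal w (i - 1) < entryVal w i ∧ entryVal w i < entryVal w (i + 1))

def doublingNumber {k : ℕ} (w : Equiv.Perm (Fin k)) : ℕ := (doublingSet w).card

/-- The decreasing permutation k(k-1)(k-2)···1. -/
def decPerm (k : ℕ) : Equiv.Perm (Fin k) := ⟨Fin.rev, Fin.rev, Fin.rev_rev, Fin.rev_rev⟩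

/-! With `p(0) = +∞` the first step `p(0) > p(1)` descends, and every position of the doubling
set continues the direction of the step before it. So if the doubling set is all of `[k-1]`, the
whole sequence `p(0), p(1), …, p(k)` is strictly decreasing; the only strictly antitone
permutation is the reversal. -/

theorem Fin.eq_rev_of_strictAnti {n : ℕ} {f : Fin n → Fin n} (hf : StrictAnti f) :
    f = Fin.rev := by
  have hid : f ∘ Fin.rev = id := (hf.comp Fin.rev_strictAnti).eq_id
  funext x
  simpa using congrFun hid (Fin.rev x)

section entryVal

variable {k : ℕ} (w : Equiv.Perm (Fin k))

theorem entryVal_zero : entryVal w 0 = k + 1 := rfl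

theorem entryVal_succ (i : Fin k) : entryVal w (i + 1) = w i + 1 := by
  simp [entryVal]

theorem entryVal_le {j : ℕ} (hj : j ≤ k) (hj0 : j ≠ 0) : entryVal w j ≤ k := by
  obtain ⟨i, rfl⟩ := Nat.exists_eq_succ_of_ne_zero hj0
  rw [entryVal_succ w ⟨i, hj⟩]
  exact (w _).isLt

theorem entryVal_decPerm {j : ℕ} (hj : j ≤ k) : entryVal (decPerm k) j = k + 1 - j := by
  rcases Nat.eq_zero_or_eq_succ_pred j with rfl | hsucc
  · rfl
  · rw [hsucc, entryVal_succ (decPerm k) ⟨j.pred, by omega⟩]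
    simp only [decPerm, Equiv.coe_fn_mk, Fin.val_rev]
    omega

end entryVal

section doublingSet

variable {k : ℕ} (w : Equiv.Perm (Fin k))

theorem doublingSet_subset_Ico : doublingSet w ⊆ Finset.Ico 1 k := Finset.filter_subset _ _

theorem doublingSet_decPerm : doublingSet (decPerm k) = Finset.Ico 1 k := by
  refine Finset.filter_true_of_mem fun i hi => Or.inl ?_
  rw [Finset.mem_Ico] at hi
  rw [entryVal_decPerm (by omega : i - 1 ≤ k), entryVal_decPerm (by omega : i ≤ k),
    entryVal_decPerm (by omega : i + 1 ≤ k)]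
  omega

variable {w}

theorem entryVal_succ_lt_of_doublingSet_eq (hw : doublingSet w = Finset.Ico 1 k) :
    ∀ i < k, entryVal w (i + 1) < entryVal w i := by
  intro i
  induction i with
  | zero =>
    intro hk
    have := entryVal_le w (j := 1) hk one_ne_zero
    rw [Nat.zero_add, entryVal_zero]
    omega
  | succ i ih =>
    intro hk
    have hprev := ih (by omega)
    have hmem : i + 1 ∈ doublingSet w := by
      rw [hw, Finset.mem_Ico]
      omega
    rw [doublingSet, Finset.mem_filter, Nat.add_sub_cancel] at hmem
    omega

theorem strictAnti_of_doublingSet_eq (hw : doublingSet w = Finset.Ico 1 k) :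
    StrictAnti w := by
  have hanti : StrictAntiOn (entryVal w) (Set.Iic k) :=
    strictAntiOn_Iic_of_succ_lt (entryVal_succ_lt_of_doublingSet_eq hw)
  intro x y hxy
  have := hanti (Set.mem_Iic.2 x.isLt) (Set.mem_Iic.2 y.isLt) (Nat.succ_lt_succ hxy)
  rw [entryVal_succ, entryVal_succ] at this
  exact Fin.lt_def.2 (by omega)

theorem eq_decPerm_of_doublingSet_eq (hw : doublingSet w = Finset.Ico 1 k) :
    w = decPerm k :=
  Equiv.ext (congrFun (Fin.eq_rev_of_strictAnti (strictAnti_of_doublingSet_eq hw)))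

end doublingSet

theorem stmt7 (k : ℕ) :
    doublingNumber (decPerm k) = k - 1 ∧
    ∀ q : Equiv.Perm (Fin k), q ≠ decPerm k → doublingNumber q < k - 1 := by
  refine ⟨by rw [doublingNumber, doublingSet_decPerm, Nat.card_Ico], fun q hq => ?_⟩
  have hssub : doublingSet q ⊂ Finset.Ico 1 k :=
    (doublingSet_subset_Ico q).ssubset_of_ne fun h => hq (eq_decPerm_of_doublingSet_eq h)
  simpa only [doublingNumber, Nat.card_Ico] using Finset.card_lt_card hssub
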